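/- arXiv:1905.05302 — 3 statements merged into one kernel-verified Lean document; each statement's English description precedes it below -/
import Mathlib

section
/- Let (W,S) be a Coxeter system, W₁ and W₂ standard parabolic subgroups, and u, v ∈ W with brmin(W₁uW₂) ≤ brmin(W₁vW₂) in the Bruhat order. Then, for any u′ ∈ W₁uW₂, there exists v′ ∈ W₁vW₂ with u′ ≤ v′. -/
variable {B W : Type*} [Group W] {M : CoxeterMatrix B}

/-- The (strong) Bruhat order on the Coxeter group `W`: `u ≤ v` if and only if some
reduced word for `v` admits a sublist whose product is `u`. -/
def BruhatLE (cs : CoxeterSystem M W) (u v : W) : Prop :=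
  ∃ ω : List B, cs.IsReduced ω ∧ cs.wordProd ω = v ∧
    ∃ ω' : List B, ω'.Sublist ω ∧ cs.wordProd ω' = u

/-- The strict Bruhat order. -/
def BruhatLT (cs : CoxeterSystem M W) (u v : W) : Prop :=
  BruhatLE cs u v ∧ u ≠ v

/-- `m` is the unique minimal element of `K` in the Bruhat order, i.e. `m ∈ K` and
`m` is Bruhat-below every element of `K`. -/
def IsBrMin (cs : CoxeterSystem M W) (K : Set W) (m : W) : Prop :=
  m ∈ K ∧ ∀ x ∈ K, BruhatLE cs m x

/-- `m` is the unique maximal element of `K` in the Bruhat order, i.e. `m ∈ K` and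
`m` is Bruhat-above every element of `K`. -/
def IsBrMax (cs : CoxeterSystem M W) (K : Set W) (m : W) : Prop :=
  m ∈ K ∧ ∀ x ∈ K, BruhatLE cs x m

/-- A standard parabolic subgroup: a subgroup generated by a subset of the simple
reflections. -/
def IsStdParabolic (cs : CoxeterSystem M W) (P : Subgroup W) : Prop :=
  ∃ X : Set B, P = Subgroup.closure (cs.simple '' X)

/-- The left coset `u•W₁ = {u * b : b ∈ W₁}`. -/
def lCoset (W₁ : Subgroup W) (u : W) : Set W := {x | ∃ b ∈ W₁, x = u * b}

/-- The double coset `W₁ u W₂ = {a * u * b : a ∈ W₁, b ∈ W₂}`. -/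
def dblCoset (W₁ W₂ : Subgroup W) (u : W) : Set W :=
  {x | ∃ a ∈ W₁, ∃ b ∈ W₂, x = a * u * b}

/-!
Along a word in the generators of `W₁` (resp. `W₂`) one can follow `u'` from `brmin(W₁uW₂)` one
simple reflection at a time, and the lifting property of the Bruhat order (if `u ≤ w` then
`s u ≤ w` or `s u ≤ s w`, and symmetrically on the right) keeps a dominating element inside
`W₁vW₂`, starting from `brmin(W₁vW₂)`.

The lifting property is immediate for the reflection form of the Bruhat order, generated by
`x < x t` for reflections `t` with `ℓ x < ℓ (x t)`. Its agreement with the subword definition rests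
on the strong exchange condition, which comes from the action of `W` on `W × {±1}` in which `sᵢ`
conjugates the first entry and flips the sign exactly at `sᵢ` (Björner–Brenti, §1.4).
-/

open List
open scoped Classical

lemma mul_mul_inv_eq_iff {G : Type*} [Group G] (a t x : G) : a * t * a⁻¹ = x ↔ t = a⁻¹ * x * a := by
  constructor <;> rintro rfl <;> group

namespace CoxeterSystem

variable (cs : CoxeterSystem M W)

local prefix:100 "s" => cs.simple
local prefix:100 "π" => cs.wordProd
local prefix:100 "ℓ" => cs.length
local prefix:100 "ris" => cs.rightInvSeq

lemma simple_mul_mul_simple_eq_iff (i : B) (t x : W) : s i * t * s i = x ↔ t = s i * x * s i := by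
  constructor <;> rintro rfl <;> simp [mul_assoc]

noncomputable def reflSignFun (i : B) (x : W × ℤˣ) : W × ℤˣ :=
  (s i * x.1 * s i, x.2 * if x.1 = s i then -1 else 1)

lemma reflSignFun_involutive (i : B) : Function.Involutive (cs.reflSignFun i) := by
  rintro ⟨t, ε⟩
  have hconj : s i * (s i * t * s i) * s i = t := by
    simp [mul_assoc, cs.simple_mul_simple_cancel_left, cs.simple_mul_simple_cancel_right]
  have hfix : s i * t * s i = s i ↔ t = s i := by
    rw [simple_mul_mul_simple_eq_iff, cs.simple_mul_simple_cancel_right]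
  simp only [reflSignFun, hconj, hfix]
  split_ifs <;> simp

noncomputable def reflSign (i : B) : Equiv.Perm (W × ℤˣ) :=
  (cs.reflSignFun_involutive i).toPerm

lemma reflSign_apply (i : B) (t : W) (ε : ℤˣ) :
    cs.reflSign i (t, ε) = (s i * t * s i, ε * if t = s i then -1 else 1) := rfl

lemma reflSign_mul_pow_apply (i j : B) (k : ℕ) (t : W) (ε : ℤˣ) :
    ((cs.reflSign i * cs.reflSign j) ^ k) (t, ε) =
      ((s i * s j) ^ k * t * ((s i * s j) ^ k)⁻¹,
        ε * ∏ e ∈ Finset.range (2 * k), if t = s j * (s i * s j) ^ e then -1 else 1) := by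
  induction k generalizing t ε with
  | zero => simp
  | succ k ih =>
    have hconj : s i * (s j * t * s j) * s i = (s i * s j) * t * (s i * s j)⁻¹ := by
      simp [mul_assoc]
    have hshift (e : ℕ) : (s i * s j) * t * (s i * s j)⁻¹ = s j * (s i * s j) ^ e ↔
        t = s j * (s i * s j) ^ (e + 1 + 1) := by
      rw [mul_mul_inv_eq_iff, pow_succ, pow_succ']
      simp [mul_assoc]
    have hone : s j * t * s j = s i ↔ t = s j * (s i * s j) ^ (0 + 1) := by
      rw [simple_mul_mul_simple_eq_iff]
      simp [mul_assoc]
    rw [pow_succ, Equiv.Perm.mul_apply, Equiv.Perm.mul_apply, reflSign_apply, reflSign_apply,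
      hconj, ih, Nat.mul_succ, Finset.prod_range_succ', Finset.prod_range_succ']
    simp only [hshift, hone, pow_zero, mul_one]
    refine Prod.ext ?_ ?_
    · simp [pow_succ, mul_assoc]
    · dsimp only
      ac_rfl

lemma reflSign_liftable : M.IsLiftable cs.reflSign := by
  intro i j
  ext ⟨t, ε⟩ : 1
  -- as `(sᵢ sⱼ) ^ M i j = 1`, the sign product over `e < 2 M i j` is the square of its first half
  rw [reflSign_mul_pow_apply, cs.simple_mul_simple_pow, two_mul, Finset.prod_range_add]
  simp only [pow_add, cs.simple_mul_simple_pow, one_mul, Int.units_mul_self, mul_one, inv_one,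
    Equiv.Perm.coe_one, id_eq]

noncomputable def reflSignRep : W →* Equiv.Perm (W × ℤˣ) :=
  cs.lift ⟨cs.reflSign, cs.reflSign_liftable⟩

lemma reflSignRep_simple (i : B) : cs.reflSignRep (s i) = cs.reflSign i :=
  cs.lift_apply_simple cs.reflSign_liftable i

lemma reflSignRep_wordProd (ω : List B) (t : W) (ε : ℤˣ) :
    cs.reflSignRep (π ω) (t, ε) =
      (π ω * t * (π ω)⁻¹, ε * ((ris ω).map fun x => if x = t then -1 else 1).prod) := by
  induction ω generalizing ε with
  | nil => simp
  | cons i ω ih =>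
    have hmem : π ω * t * (π ω)⁻¹ = s i ↔ (π ω)⁻¹ * s i * π ω = t := by
      rw [mul_mul_inv_eq_iff, eq_comm]
    rw [cs.wordProd_cons, map_mul, Equiv.Perm.mul_apply, ih, reflSignRep_simple, reflSign_apply,
      rightInvSeq, List.map_cons, List.prod_cons, hmem]
    refine Prod.ext ?_ ?_
    · simp [mul_assoc]
    · dsimp only
      ac_rfl

lemma reflSignRep_apply_fst (w t : W) (ε : ℤˣ) : (cs.reflSignRep w (t, ε)).1 = w * t * w⁻¹ := by
  obtain ⟨ω, rfl⟩ := cs.wordProd_surjective w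
  rw [reflSignRep_wordProd]

lemma reflSignRep_apply_neg (w t : W) (ε : ℤˣ) :
    cs.reflSignRep w (t, -ε) = ((cs.reflSignRep w (t, ε)).1, -(cs.reflSignRep w (t, ε)).2) := by
  obtain ⟨ω, rfl⟩ := cs.wordProd_surjective w
  simp only [reflSignRep_wordProd, neg_mul]

lemma reflSignRep_wordProd_of_notMem {ω : List B} {t : W} (ht : t ∉ ris ω) (ε : ℤˣ) :
    cs.reflSignRep (π ω) (t, ε) = (π ω * t * (π ω)⁻¹, ε) := by
  rw [reflSignRep_wordProd, List.prod_eq_one, mul_one]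
  simp only [List.mem_map]
  rintro _ ⟨x, hx, rfl⟩
  exact if_neg (by rintro rfl; exact ht hx)

lemma reflSignRep_self {t : W} (ht : cs.IsReflection t) (ε : ℤˣ) :
    cs.reflSignRep t (t, ε) = (t, -ε) := by
  obtain ⟨w, i, rfl⟩ := ht
  set p := cs.reflSignRep w⁻¹ (w * s i * w⁻¹, ε)
  have hp : p = (s i, p.2) := by
    refine Prod.ext ?_ rfl
    rw [reflSignRep_apply_fst]
    group
  have hback : cs.reflSignRep w p = (w * s i * w⁻¹, ε) := by
    rw [← Equiv.Perm.mul_apply, ← map_mul, mul_inv_cancel, map_one, Equiv.Perm.one_apply]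
  have hflip : cs.reflSign i p = (s i, -p.2) := by
    rw [hp, reflSign_apply, if_pos rfl, cs.simple_mul_simple_cancel_right, mul_neg_one]
  rw [map_mul, map_mul, reflSignRep_simple, Equiv.Perm.mul_apply, Equiv.Perm.mul_apply,
    hflip, reflSignRep_apply_neg, ← hp, hback]

theorem mem_rightInvSeq_of_length_mul_lt {ω : List B} {t : W} (ht : cs.IsReflection t)
    (hlt : ℓ (π ω * t) < ℓ (π ω)) : t ∈ ris ω := by
  -- the sign attached to `t` is `1` at `π ω`, hence `-1` at `π ω * t`, so `t` occurs in the right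
  -- inversion sequence of `π ω * t` and is one of its inversions
  by_contra hω
  obtain ⟨ρ, hρ, hρω⟩ := cs.exists_isReduced (π ω * t)
  have hsign : cs.reflSignRep (π ρ) (t, 1) = (π ρ * t * (π ρ)⁻¹, -1) := by
    rw [← hρω, map_mul, Equiv.Perm.mul_apply, reflSignRep_self cs ht,
      reflSignRep_apply_neg, reflSignRep_wordProd_of_notMem cs hω]
    simp [mul_assoc, ht.mul_self, ht.inv]
  have hρt : t ∈ ris ρ := by
    by_contra hρt
    rw [reflSignRep_wordProd_of_notMem cs hρt, Prod.mk.injEq] at hsign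
    exact absurd hsign.2 (by decide)
  have := (cs.isRightInversion_of_mem_rightInvSeq hρ hρt).2
  rw [← hρω, mul_assoc, ht.mul_self, mul_one] at this
  omega

theorem exists_wordProd_eraseIdx_eq_mul {ω : List B} {t : W} (ht : cs.IsReflection t)
    (hlt : ℓ (π ω * t) < ℓ (π ω)) : ∃ j < ω.length, π (ω.eraseIdx j) = π ω * t := by
  obtain ⟨j, hj, hjt⟩ := List.getElem_of_mem (cs.mem_rightInvSeq_of_length_mul_lt ht hlt)
  rw [length_rightInvSeq] at hj
  refine ⟨j, hj, ?_⟩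
  rw [← wordProd_mul_getD_rightInvSeq, List.getD_eq_getElem _ _ (by simpa using hj), hjt]

def ReflUp (u w : W) : Prop := ∃ t, cs.IsReflection t ∧ w = u * t ∧ ℓ u < ℓ w

def ReflLE : W → W → Prop := Relation.ReflTransGen cs.ReflUp

lemma reflUp_simple_mul {w : W} {i : B} (h : ℓ w < ℓ (s i * w)) : cs.ReflUp w (s i * w) :=
  ⟨w⁻¹ * s i * w, ⟨w⁻¹, i, by group⟩, by group, h⟩

lemma reflUp_wordProd_cons {i : B} {ω : List B} (h : cs.IsReduced (i :: ω)) :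
    cs.ReflUp (π ω) (π (i :: ω)) := by
  have hlen := cs.length_wordProd_le ω
  rw [IsReduced, List.length_cons] at h
  rw [cs.wordProd_cons] at h ⊢
  exact cs.reflUp_simple_mul (by omega)

variable {cs}

lemma ReflUp.simple_mul {x w : W} (h : cs.ReflUp x w) (i : B) :
    s i * x = w ∨ cs.ReflUp (s i * x) (s i * w) := by
  obtain ⟨t, ht, rfl, hxt⟩ := h
  rcases (ht.length_mul_left_ne (s i * x)).lt_or_gt with hlt | hgt
  · -- strong exchange in the word `i :: ω` for `sᵢ x` deletes either `i`, giving `x t`, or a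
    -- letter of `ω`, which is too short for `x t`
    left
    obtain ⟨ω, hω, rfl⟩ := cs.exists_isReduced x
    rw [← cs.wordProd_cons] at hlt
    obtain ⟨j, hj, hjt⟩ := cs.exists_wordProd_eraseIdx_eq_mul ht hlt
    cases j with
    | zero =>
      rw [List.eraseIdx_cons_zero, cs.wordProd_cons] at hjt
      nth_rw 1 [hjt]
      simp [mul_assoc]
    | succ k =>
      rw [List.eraseIdx_cons_succ, cs.wordProd_cons, cs.wordProd_cons, mul_assoc,
        mul_right_inj] at hjt
      have := cs.length_wordProd_le (ω.eraseIdx k)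
      rw [List.length_eraseIdx_of_lt (by simpa using hj), hjt, ← hω] at this
      omega
  · right
    exact ⟨t, ht, (mul_assoc _ _ _).symm, by rwa [← mul_assoc]⟩

lemma ReflLE.simple_mul {u w : W} (h : cs.ReflLE u w) (i : B) :
    cs.ReflLE (s i * u) w ∨ cs.ReflLE (s i * u) (s i * w) := by
  induction h with
  | refl => exact .inr .refl
  | tail _ hxw ih =>
    rcases ih with h | h
    · exact .inl (h.tail hxw)
    · rcases hxw.simple_mul i with heq | hup
      · exact .inl (heq ▸ h)
      · exact .inr (h.tail hup)

lemma exists_sublist_wordProd_eq_of_reflLE {u : W} {ω : List B} (h : cs.ReflLE u (π ω)) :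
    ∃ ω', ω' <+ ω ∧ π ω' = u := by
  induction h using Relation.ReflTransGen.head_induction_on with
  | refl => exact ⟨ω, .refl ω, rfl⟩
  | head hux _ ih =>
    obtain ⟨ω', hω', rfl⟩ := ih
    obtain ⟨t, ht, hxt, hlt⟩ := hux
    have hlt' : ℓ (π ω' * t) < ℓ (π ω') := by
      rw [hxt] at hlt ⊢
      rwa [mul_assoc, ht.mul_self, mul_one]
    obtain ⟨j, -, hj⟩ := cs.exists_wordProd_eraseIdx_eq_mul ht hlt'
    refine ⟨ω'.eraseIdx j, (List.eraseIdx_sublist ω' j).trans hω', ?_⟩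
    rw [hj, hxt, mul_assoc, ht.mul_self, mul_one]

lemma reflLE_wordProd_of_sublist {ω' ω : List B} (h : ω' <+ ω) (hω : cs.IsReduced ω) :
    cs.ReflLE (π ω') (π ω) := by
  induction h with
  | slnil => exact .refl
  | cons i _ ih => exact (ih (hω.drop 1)).tail (cs.reflUp_wordProd_cons hω)
  | cons_cons i _ ih =>
    rw [cs.wordProd_cons]
    rcases (ih (hω.drop 1)).simple_mul i with h | h
    · exact h.tail (cs.reflUp_wordProd_cons hω)
    · rwa [cs.wordProd_cons]

theorem _root_.bruhatLE_iff_reflLE {u w : W} : BruhatLE cs u w ↔ cs.ReflLE u w := by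
  constructor
  · rintro ⟨ω, hω, rfl, ω', hω', rfl⟩
    exact reflLE_wordProd_of_sublist hω' hω
  · intro h
    obtain ⟨ω, hω, rfl⟩ := cs.exists_isReduced w
    obtain ⟨ω', hω', rfl⟩ := exists_sublist_wordProd_eq_of_reflLE h
    exact ⟨ω, hω, rfl, ω', hω', rfl⟩

theorem _root_.BruhatLE.simple_mul {u w : W} (h : BruhatLE cs u w) (i : B) :
    BruhatLE cs (s i * u) w ∨ BruhatLE cs (s i * u) (s i * w) := by
  simpa only [bruhatLE_iff_reflLE] using (bruhatLE_iff_reflLE.mp h).simple_mul i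

theorem _root_.BruhatLE.inv {u w : W} (h : BruhatLE cs u w) : BruhatLE cs u⁻¹ w⁻¹ := by
  obtain ⟨ω, hω, rfl, ω', hω', rfl⟩ := h
  exact ⟨ω.reverse, hω.reverse, cs.wordProd_reverse ω, ω'.reverse, hω'.reverse,
    cs.wordProd_reverse ω'⟩

theorem _root_.BruhatLE.mul_simple {u w : W} (h : BruhatLE cs u w) (i : B) :
    BruhatLE cs (u * s i) w ∨ BruhatLE cs (u * s i) (w * s i) := by
  have := (h.inv.simple_mul i).imp BruhatLE.inv BruhatLE.inv
  simpa only [mul_inv_rev, inv_inv, inv_simple] using this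

end CoxeterSystem

section DoubleCoset

variable {W₁ W₂ : Subgroup W} {u v x g : W}

lemma dblCoset_subset_of_mem (h : v ∈ dblCoset W₁ W₂ u) : dblCoset W₁ W₂ u ⊆ dblCoset W₁ W₂ v := by
  obtain ⟨a, ha, b, hb, rfl⟩ := h
  rintro _ ⟨c, hc, d, hd, rfl⟩
  exact ⟨c * a⁻¹, mul_mem hc (inv_mem ha), b⁻¹ * d, mul_mem (inv_mem hb) hd, by group⟩

lemma mul_mem_dblCoset_left (hg : g ∈ W₁) (hx : x ∈ dblCoset W₁ W₂ v) :
    g * x ∈ dblCoset W₁ W₂ v := by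
  obtain ⟨a, ha, b, hb, rfl⟩ := hx
  exact ⟨g * a, mul_mem hg ha, b, hb, by group⟩

lemma mul_mem_dblCoset_right (hg : g ∈ W₂) (hx : x ∈ dblCoset W₁ W₂ v) :
    x * g ∈ dblCoset W₁ W₂ v := by
  obtain ⟨a, ha, b, hb, rfl⟩ := hx
  exact ⟨a, ha, b * g, mul_mem hb hg, by group⟩

end DoubleCoset

section Parabolic

variable {cs : CoxeterSystem M W} {P : Subgroup W} {D : Set W} {g c : W}

theorem IsStdParabolic.exists_bruhatLE_mul_left (hP : IsStdParabolic cs P)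
    (hD : ∀ g ∈ P, ∀ y ∈ D, g * y ∈ D) (hg : g ∈ P) (hc : ∃ y ∈ D, BruhatLE cs c y) :
    ∃ y ∈ D, BruhatLE cs (g * c) y := by
  obtain ⟨X, rfl⟩ := hP
  have hstep {i : B} (hi : i ∈ X) {z : W} (hz : ∃ y ∈ D, BruhatLE cs z y) :
      ∃ y ∈ D, BruhatLE cs (cs.simple i * z) y := by
    obtain ⟨y, hy, hzy⟩ := hz
    rcases hzy.simple_mul i with h | h
    · exact ⟨y, hy, h⟩
    · exact ⟨_, hD _ (Subgroup.subset_closure ⟨i, hi, rfl⟩) y hy, h⟩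
  induction hg using Subgroup.closure_induction_left generalizing c with
  | one => simpa using hc
  | mul_left _ hx _ _ ih =>
    obtain ⟨i, hi, rfl⟩ := hx
    simpa only [mul_assoc] using hstep hi (ih hc)
  | inv_mul_cancel _ hx _ _ ih =>
    obtain ⟨i, hi, rfl⟩ := hx
    simpa only [mul_assoc, cs.inv_simple] using hstep hi (ih hc)

theorem IsStdParabolic.exists_bruhatLE_mul_right (hP : IsStdParabolic cs P)
    (hD : ∀ g ∈ P, ∀ y ∈ D, y * g ∈ D) (hg : g ∈ P) (hc : ∃ y ∈ D, BruhatLE cs c y) :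
    ∃ y ∈ D, BruhatLE cs (c * g) y := by
  obtain ⟨X, rfl⟩ := hP
  have hstep {i : B} (hi : i ∈ X) {z : W} (hz : ∃ y ∈ D, BruhatLE cs z y) :
      ∃ y ∈ D, BruhatLE cs (z * cs.simple i) y := by
    obtain ⟨y, hy, hzy⟩ := hz
    rcases hzy.mul_simple i with h | h
    · exact ⟨y, hy, h⟩
    · exact ⟨_, hD _ (Subgroup.subset_closure ⟨i, hi, rfl⟩) y hy, h⟩
  induction hg using Subgroup.closure_induction_right generalizing c with
  | one => simpa using hc
  | mul_right _ _ _ hx ih =>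
    obtain ⟨i, hi, rfl⟩ := hx
    simpa only [mul_assoc] using hstep hi (ih hc)
  | mul_inv_cancel _ _ _ hx ih =>
    obtain ⟨i, hi, rfl⟩ := hx
    simpa only [mul_assoc, cs.inv_simple] using hstep hi (ih hc)

end Parabolic

/-- Let `W₁, W₂` be standard parabolic subgroups and `u, v ∈ W` with
`brmin(W₁uW₂) ≤ brmin(W₁vW₂)`.  Then for any `u' ∈ W₁uW₂` there exists `v' ∈ W₁vW₂`
with `u' ≤ v'`. -/
theorem stmt_9 (cs : CoxeterSystem M W) (W₁ W₂ : Subgroup W)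
    (h₁ : IsStdParabolic cs W₁) (h₂ : IsStdParabolic cs W₂) (u v m₁ m₂ : W)
    (hm₁ : IsBrMin cs (dblCoset W₁ W₂ u) m₁)
    (hm₂ : IsBrMin cs (dblCoset W₁ W₂ v) m₂)
    (hle : BruhatLE cs m₁ m₂) :
    ∀ u' ∈ dblCoset W₁ W₂ u, ∃ v' ∈ dblCoset W₁ W₂ v, BruhatLE cs u' v' := by
  intro u' hu'
  obtain ⟨a, ha, b, hb, rfl⟩ := dblCoset_subset_of_mem hm₁.1 hu'
  have hright := h₂.exists_bruhatLE_mul_right (fun _ hg _ hy => mul_mem_dblCoset_right hg hy) hb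
    ⟨m₂, hm₂.1, hle⟩
  simpa only [mul_assoc] using
    h₁.exists_bruhatLE_mul_left (fun _ hg _ hy => mul_mem_dblCoset_left hg hy) ha hright
end

section
/- Let (W,S) be a Coxeter system, W₁ a standard parabolic subgroup, and σ, w ∈ W. Set J_{σW₁}(w) = { v ∈ σW₁ : w ≤ v }. Then: (1) J_{σW₁}(w) ⊇ J_{σW₁}(w′) whenever w ≤ w′; (2) for any s ∈ S, J_{σW₁}(w) ⊆ s·J_{sσW₁}(w ∧ sw); and (3) J_{σW₁}(w) is nonempty if and only if brmin(wW₁) ≤ brmin(σW₁) in the Bruhat order. -/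
variable {B W : Type*} [Group W] {M : CoxeterMatrix B}

/-- `J_{σW₁}(w) = { v ∈ σW₁ : w ≤ v }`. -/
def Jset (cs : CoxeterSystem M W) (W₁ : Subgroup W) (σ w : W) : Set W :=
  {v | v ∈ lCoset W₁ σ ∧ BruhatLE cs w v}

/-!
The Bruhat order is handled through its chain description: `u ≤ v` iff `v` is reached from `u`
by right multiplications by reflections that increase the length. The two descriptions agree by
the strong exchange condition, proved by the parity argument of Tits: the maps
`(t, ε) ↦ (s t s, ε + [t = s])` on `W × ZMod 2` satisfy the Coxeter relations, so the parity of
the number of occurrences of `t` in the right inversion sequence of a word depends only on the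
product of the word, and it is odd when `t` is a right inversion of that product. In particular
every reduced word of `v` contains a subword for each `u ≤ v`.

Part (1) is transitivity. For (2), if `s v < v` then `v` has a reduced word starting with `s`,
and a subword of it for `w` either avoids that letter (so `w ≤ s v`) or uses it
(so `s w ≤ s v`). For (3), let `m` be the minimum of `σW₁`: it is also length-minimal, so
appending a reduced word of `b ∈ W₁` to one of `m` gives a reduced word of `m b`. A subword of
such a word for `brmin(wW₁)` splits into a subword of the reduced word of `m` and an element of
`W₁`, which gives `brmin(wW₁) ≤ m`; conversely, a subword for `brmin(wW₁)` of the reduced word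
of `m`, followed by the word of `b = brmin(wW₁)⁻¹ w`, shows `w ≤ m b ∈ σW₁`.
-/

open List

namespace CoxeterSystem

variable (cs : CoxeterSystem M W)

local prefix:100 "s " => cs.simple
local prefix:100 "π " => cs.wordProd
local prefix:100 "ℓ " => cs.length
local prefix:100 "ris " => cs.rightInvSeq
local prefix:100 "lis " => cs.leftInvSeq

theorem rightInvSeq_append (ω ω' : List B) :
    ris (ω ++ ω') = (ris ω).map (MulAut.conj (π ω')⁻¹) ++ ris ω' := by
  induction ω with
  | nil => simp
  | cons i ω ih =>
    simp only [cons_append, rightInvSeq, ih, wordProd_append, map_cons, MulAut.conj_apply,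
      inv_inv, mul_inv_rev]
    group

theorem leftInvSeq_eq_map_conj (ω : List B) :
    lis ω = (ris ω).map (MulAut.conj (π ω)) := by
  induction ω with
  | nil => simp
  | cons i ω ih =>
    simp only [leftInvSeq, rightInvSeq, ih, map_cons, map_map, wordProd_cons]
    refine congr_arg₂ _ (by simp [mul_assoc]) (map_congr_left fun x _ => ?_)
    simp only [Function.comp_apply, MulAut.conj_apply, mul_inv_rev, inv_simple]
    group

theorem lift_wordProd {G : Type*} [Monoid G] {f : B → G} (hf : M.IsLiftable f) (ω : List B) :
    cs.lift ⟨f, hf⟩ (π ω) = (ω.map f).prod := by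
  rw [wordProd, map_list_prod, map_map]
  exact congr_arg _ (map_congr_left fun i _ => cs.lift_apply_simple hf i)

section Parity

variable [DecidableEq W]

theorem count_map_conj (g t : W) (l : List W) :
    (l.map (MulAut.conj g)).count (MulAut.conj g t) = l.count t :=
  count_map_of_injective _ _ (MulAut.conj g).injective t

noncomputable def conjParity (i : B) : Function.End (W × ZMod 2) :=
  fun p => (s i * p.1 * s i, p.2 + if p.1 = s i then 1 else 0)

theorem prod_map_conjParity_apply (ω : List B) (p : W × ZMod 2) :
    ((ω.map cs.conjParity).prod : Function.End (W × ZMod 2)) p =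
      (π ω * p.1 * (π ω)⁻¹, p.2 + ((ris ω).count p.1 : ZMod 2)) := by
  induction ω with
  | nil => simp; rfl
  | cons i ω ih =>
    change cs.conjParity i ((ω.map cs.conjParity).prod p) = _
    rw [ih]
    have hconj : π ω * p.1 * (π ω)⁻¹ = s i ↔ (π ω)⁻¹ * s i * π ω = p.1 := by
      constructor <;> intro h <;> rw [← h] <;> group
    simp only [conjParity, wordProd_cons, rightInvSeq, count_cons, mul_inv_rev, inv_simple,
      beq_iff_eq, hconj, Nat.cast_add, Nat.cast_ite, Nat.cast_one, Nat.cast_zero, Prod.mk.injEq]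
    exact ⟨by group, by ring⟩

theorem even_count_leftInvSeq_alternatingWord (i j : B) (t : W) :
    Even ((lis (alternatingWord i j (2 * M i j))).count t) := by
  set l := lis (alternatingWord i j (2 * M i j))
  -- the `k`-th entry of `l` is `s i * (s j * s i) ^ k`, and `(s j * s i) ^ M i j = 1`
  have hperiodic : l.drop (M i j) = l.take (M i j) := by
    refine ext_getElem (by simp [l]; omega) fun k _ hk => ?_
    simp only [length_take, length_leftInvSeq, length_alternatingWord, l] at hk
    simp only [getElem_drop, getElem_take, l]
    rw [getElem_leftInvSeq_alternatingWord cs i j _ _ (by omega),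
      getElem_leftInvSeq_alternatingWord cs i j _ _ (by omega), prod_alternatingWord_eq_mul_pow,
      prod_alternatingWord_eq_mul_pow, if_neg (by simp [parity_simps]),
      if_neg (by simp [parity_simps]),
      (by omega : (2 * (M i j + k) + 1) / 2 = M i j + k), (by omega : (2 * k + 1) / 2 = k),
      pow_add, simple_mul_simple_pow', one_mul]
  rw [← take_append_drop (M i j) l, count_append, hperiodic]
  exact ⟨_, rfl⟩

theorem isLiftable_conjParity : M.IsLiftable cs.conjParity := by
  intro i j
  have hword : (cs.conjParity i * cs.conjParity j) ^ M i j =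
      ((alternatingWord i j (2 * M i j)).map cs.conjParity).prod := by
    generalize M i j = n
    induction n with
    | zero => rfl
    | succ n ih =>
      rw [(by ring : 2 * (n + 1) = 2 * n + 1 + 1), alternatingWord_succ', alternatingWord_succ',
        if_neg (by simp [parity_simps]), if_pos (by simp [parity_simps]), pow_succ', ih]
      simp [mul_assoc]
  have hone : π (alternatingWord i j (2 * M i j)) = 1 := by
    rw [prod_alternatingWord_eq_mul_pow, if_pos (by simp), Nat.mul_div_cancel_left _ two_pos,
      one_mul, simple_mul_simple_pow]
  funext p
  obtain ⟨c, hc⟩ := cs.even_count_leftInvSeq_alternatingWord i j p.1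
  simp only [leftInvSeq_eq_map_conj, hone, map_one, MulAut.coe_one, map_id] at hc
  rw [hword, prod_map_conjParity_apply, hone, hc, Nat.cast_add, CharTwo.add_self_eq_zero]
  simp only [one_mul, inv_one, mul_one, add_zero]
  rfl

theorem count_rightInvSeq_cast_eq_of_wordProd_eq {ω ω' : List B} (h : π ω = π ω') (t : W) :
    ((ris ω).count t : ZMod 2) = (ris ω').count t := by
  have hprod := congr_arg (fun φ : Function.End (W × ZMod 2) => (φ (t, 0)).2)
    ((cs.lift_wordProd cs.isLiftable_conjParity ω).symm.trans
      ((congr_arg _ h).trans (cs.lift_wordProd cs.isLiftable_conjParity ω')))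
  simpa only [prod_map_conjParity_apply, zero_add] using hprod

theorem count_rightInvSeq_cast_eq_one_of_wordProd_eq {t : W} (ht : cs.IsReflection t)
    {ω : List B} (hω : π ω = t) : ((ris ω).count t : ZMod 2) = 1 := by
  obtain ⟨u, i, rfl⟩ := ht
  obtain ⟨α, rfl⟩ := cs.wordProd_surjective u
  have hpalindrome : π (α ++ i :: α.reverse) = π α * s i * (π α)⁻¹ := by
    simp [wordProd_append, wordProd_cons, mul_assoc]
  have hleft :
      ((ris α).map (MulAut.conj (π (i :: α.reverse))⁻¹)).count (π α * s i * (π α)⁻¹) =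
        (ris α).count (s i) := by
    rw [← count_map_conj (π (i :: α.reverse))⁻¹ (s i)]
    simp [wordProd_cons, mul_assoc]
  have hright : (ris α.reverse).count (π α * s i * (π α)⁻¹) = (ris α).count (s i) := by
    rw [rightInvSeq_reverse, count_reverse, leftInvSeq_eq_map_conj,
      ← count_map_conj (π α) (s i)]
    rfl
  rw [cs.count_rightInvSeq_cast_eq_of_wordProd_eq (hω.trans hpalindrome.symm), rightInvSeq_append,
    count_append, rightInvSeq, count_cons, hleft, hright]
  simp only [wordProd_reverse, inv_inv, mul_assoc, BEq.rfl, ↓reduceIte, Nat.cast_add,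
    Nat.cast_one]
  rw [← add_assoc, CharTwo.add_self_eq_zero, zero_add]

theorem count_rightInvSeq_cast_eq_one_of_isRightInversion {ω : List B} {t : W}
    (h : cs.IsRightInversion (π ω) t) : ((ris ω).count t : ZMod 2) = 1 := by
  obtain ⟨τ, hτ, hτω⟩ := cs.exists_isReduced (π ω * t)
  obtain ⟨β, hβ⟩ := cs.wordProd_surjective t
  have hτβ : π (τ ++ β) = π ω := by
    rw [wordProd_append, ← hτω, hβ, mul_assoc, h.1.mul_self, mul_one]
  have hτt : t ∉ ris τ := fun hmem => by
    have hinv := (cs.isRightInversion_of_mem_rightInvSeq hτ hmem).2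
    rw [← hτω, mul_assoc, h.1.mul_self, mul_one] at hinv
    exact absurd h.2 (not_lt.mpr hinv.le)
  have hfix : MulAut.conj (π β)⁻¹ t = t := by simp [hβ, h.1.inv, h.1.mul_self]
  rw [← cs.count_rightInvSeq_cast_eq_of_wordProd_eq hτβ, rightInvSeq_append, count_append,
    ← hfix, count_map_conj, hfix, count_eq_zero_of_not_mem hτt, zero_add,
    cs.count_rightInvSeq_cast_eq_one_of_wordProd_eq h.1 hβ]

end Parity

theorem mem_rightInvSeq_of_isRightInversion {ω : List B} {t : W}
    (h : cs.IsRightInversion (π ω) t) : t ∈ ris ω := by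
  classical
  by_contra hmem
  simpa [count_eq_zero_of_not_mem hmem] using cs.count_rightInvSeq_cast_eq_one_of_isRightInversion h

theorem exists_wordProd_mul_eq_wordProd_eraseIdx {ω : List B} {t : W}
    (h : cs.IsRightInversion (π ω) t) : ∃ j < ω.length, π ω * t = π (ω.eraseIdx j) := by
  obtain ⟨j, hj, rfl⟩ := mem_iff_getElem.mp (cs.mem_rightInvSeq_of_isRightInversion h)
  rw [length_rightInvSeq] at hj
  refine ⟨j, hj, ?_⟩
  rw [← wordProd_mul_getD_rightInvSeq, getD_eq_getElem]

theorem exists_isReduced_sublist (ω : List B) :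
    ∃ ρ, ρ <+ ω ∧ cs.IsReduced ρ ∧ π ρ = π ω := by
  induction ω using reverseRecOn with
  | nil => exact ⟨[], Sublist.refl _, by simp [IsReduced], rfl⟩
  | append_singleton ω i ih =>
    obtain ⟨ρ, hρω, hρ, hρπ⟩ := ih
    rcases cs.length_mul_simple (π ρ) i with hup | hdown
    · refine ⟨ρ ++ [i], hρω.append (Sublist.refl _), ?_, by simp [wordProd_append, hρπ]⟩
      simp [IsReduced, wordProd_append, hup, hρ.eq]
    · have hinv : cs.IsRightInversion (π ρ) (s i) := ⟨cs.isReflection_simple i, by omega⟩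
      obtain ⟨j, hj, hρj⟩ := cs.exists_wordProd_mul_eq_wordProd_eraseIdx hinv
      refine ⟨ρ.eraseIdx j,
        ((eraseIdx_sublist ρ j).trans hρω).trans (sublist_append_left ω [i]), ?_,
        by simp [← hρj, wordProd_append, hρπ]⟩
      rw [IsReduced, ← hρj, length_eraseIdx_of_lt hj]
      have := hρ.eq
      omega

def BruhatStep (u v : W) : Prop := ∃ t, cs.IsReflection t ∧ v = u * t ∧ ℓ u < ℓ v

abbrev BruhatChain : W → W → Prop := Relation.ReflTransGen cs.BruhatStep

variable {cs}

theorem bruhatChain_mul_of_length_lt {u t : W} (ht : cs.IsReflection t) (h : ℓ u < ℓ (u * t)) :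
    cs.BruhatChain u (u * t) :=
  .single ⟨t, ht, rfl, h⟩

theorem bruhatChain_mul_simple_of_length_lt {u : W} {i : B} (h : ℓ (u * s i) < ℓ u) :
    cs.BruhatChain (u * s i) u := by
  have := bruhatChain_mul_of_length_lt (cs.isReflection_simple i)
    (by rwa [simple_mul_simple_cancel_right])
  rwa [simple_mul_simple_cancel_right] at this

theorem BruhatChain.exists_sublist {u v : W} (h : cs.BruhatChain u v) {ω : List B}
    (hω : cs.IsReduced ω) (hv : π ω = v) : ∃ ω', ω' <+ ω ∧ π ω' = u := by
  induction h generalizing ω with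
  | refl => exact ⟨ω, Sublist.refl _, hv⟩
  | tail _ hstep ih =>
    obtain ⟨t, ht, rfl, hlt⟩ := hstep
    have hinv : cs.IsRightInversion (π ω) t := by
      refine ⟨ht, ?_⟩
      rwa [hv, mul_assoc, ht.mul_self, mul_one]
    obtain ⟨j, -, hj⟩ := cs.exists_wordProd_mul_eq_wordProd_eraseIdx hinv
    obtain ⟨ρ, hρ, hρred, hρπ⟩ := cs.exists_isReduced_sublist (ω.eraseIdx j)
    obtain ⟨ω', hω', rfl⟩ :=
      ih hρred (by rw [hρπ, ← hj, hv, mul_assoc, ht.mul_self, mul_one])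
    exact ⟨ω', hω'.trans (hρ.trans (eraseIdx_sublist ω j)), rfl⟩

theorem eq_simple_of_length_mul_lt {w t : W} {i : B} (ht : cs.IsReflection t)
    (hwi : ℓ w < ℓ (w * s i)) (hwt : ℓ w < ℓ (w * t))
    (hwti : ℓ (w * t * s i) < ℓ (w * s i)) : t = s i := by
  obtain ⟨ρ, hρ, rfl⟩ := cs.exists_isReduced w
  have hconj : π ρ * s i * (s i * t * s i) = π ρ * t * s i := by
    simp [mul_assoc, simple_mul_simple_cancel_left]
  have hinv : cs.IsRightInversion (π (ρ ++ [i])) (s i * t * s i) := by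
    refine ⟨by simpa [inv_simple] using ht.conj (s i), ?_⟩
    rwa [wordProd_append, wordProd_singleton, hconj]
  obtain ⟨j, hj, hρj⟩ := cs.exists_wordProd_mul_eq_wordProd_eraseIdx hinv
  rw [wordProd_append, wordProd_singleton, hconj] at hρj
  rw [length_append, length_singleton] at hj
  rcases Nat.lt_or_ge j ρ.length with hjρ | hjρ
  · rw [eraseIdx_append_of_lt_length hjρ, wordProd_append, wordProd_singleton,
      mul_left_inj] at hρj
    have := cs.length_wordProd_le (ρ.eraseIdx j)
    rw [← hρj, length_eraseIdx_of_lt hjρ, ← hρ.eq] at this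
    omega
  · rw [eraseIdx_append_of_length_le hjρ, (by omega : j - ρ.length = 0), eraseIdx_cons_zero,
      append_nil] at hρj
    simpa [mul_assoc, mul_eq_one_iff_eq_inv, inv_simple] using hρj.symm

theorem BruhatChain.mul_simple_or {x y : W} (h : cs.BruhatChain x y) (i : B) :
    cs.BruhatChain (x * s i) y ∨ cs.BruhatChain (x * s i) (y * s i) := by
  induction h with
  | refl =>
    rcases cs.length_mul_simple x i with hup | hdown
    · exact .inr .refl
    · exact .inl (bruhatChain_mul_simple_of_length_lt (by omega))
  | tail _ hstep ih =>
    rename_i y' y _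
    obtain ⟨t, ht, rfl, hlt⟩ := hstep
    rcases ih with hy' | hy's
    · exact .inl (hy'.tail ⟨t, ht, rfl, hlt⟩)
    rcases cs.length_mul_simple y' i with hup | hdown
    swap
    · exact .inl ((hy's.trans (bruhatChain_mul_simple_of_length_lt (by omega))).tail
        ⟨t, ht, rfl, hlt⟩)
    have hconj : y' * s i * (s i * t * s i) = y' * t * s i := by
      simp [mul_assoc, simple_mul_simple_cancel_left]
    have ht' : cs.IsReflection (s i * t * s i) := by simpa [inv_simple] using ht.conj (s i)
    rcases (ht'.length_mul_left_ne (y' * s i)).lt_or_gt with hdown' | hup'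
    · rw [hconj] at hdown'
      obtain rfl := eq_simple_of_length_mul_lt ht (by omega) hlt hdown'
      exact .inl hy's
    · exact .inr (hy's.trans (hconj ▸ bruhatChain_mul_of_length_lt ht' hup'))

theorem bruhatChain_of_sublist {ω ω' : List B} (hω : cs.IsReduced ω) (h : ω' <+ ω) :
    cs.BruhatChain (π ω') (π ω) := by
  induction ω using reverseRecOn generalizing ω' with
  | nil => rw [sublist_nil.mp h]
  | append_singleton κ i ih =>
    have hκ : cs.IsReduced κ := by simpa using hω.take κ.length
    have hstep : cs.BruhatChain (π κ) (π (κ ++ [i])) := by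
      rw [wordProd_append, wordProd_singleton]
      refine bruhatChain_mul_of_length_lt (cs.isReflection_simple i) ?_
      have := hκ.eq
      have := hω.eq
      simp only [wordProd_append, wordProd_singleton, length_append, length_singleton] at this
      omega
    obtain ⟨ω₁, ω₂, rfl, h₁, h₂⟩ := sublist_append_iff.mp h
    rcases sublist_singleton.mp h₂ with rfl | rfl
    · simpa using (ih hκ h₁).trans hstep
    · rw [wordProd_append, wordProd_singleton]
      rcases (ih hκ h₁).mul_simple_or i with hκ' | hκi
      · exact hκ'.trans hstep
      · simpa [wordProd_append] using hκi

theorem bruhatLE_iff_bruhatChain {u v : W} : BruhatLE cs u v ↔ cs.BruhatChain u v := by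
  constructor
  · rintro ⟨ω, hω, rfl, ω', h, rfl⟩
    exact bruhatChain_of_sublist hω h
  · intro h
    obtain ⟨ω, hω, rfl⟩ := cs.exists_isReduced v
    obtain ⟨ω', h', rfl⟩ := h.exists_sublist hω rfl
    exact ⟨ω, hω, rfl, ω', h', rfl⟩

theorem _root_.BruhatLE.trans {u v w : W} (huv : BruhatLE cs u v) (hvw : BruhatLE cs v w) :
    BruhatLE cs u w := by
  rw [bruhatLE_iff_bruhatChain] at *
  exact huv.trans hvw

theorem _root_.BruhatLE.exists_sublist {u v : W} (h : BruhatLE cs u v) {ω : List B}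
    (hω : cs.IsReduced ω) (hv : π ω = v) : ∃ ω', ω' <+ ω ∧ π ω' = u :=
  (bruhatLE_iff_bruhatChain.mp h).exists_sublist hω hv

theorem _root_.BruhatLE.length_le {u v : W} (h : BruhatLE cs u v) : ℓ u ≤ ℓ v := by
  obtain ⟨ω, hω, rfl⟩ := cs.exists_isReduced v
  obtain ⟨ω', h', rfl⟩ := h.exists_sublist hω rfl
  exact (cs.length_wordProd_le ω').trans (h'.length_le.trans hω.eq.ge)

theorem bruhatLE_of_sublist {ω ω' : List B} (hω : cs.IsReduced ω) (h : ω' <+ ω) :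
    BruhatLE cs (π ω') (π ω) :=
  ⟨ω, hω, rfl, ω', h, rfl⟩

theorem bruhatLE_simple_mul_of_length_lt {v : W} {i : B} (h : ℓ v < ℓ (s i * v)) :
    BruhatLE cs v (s i * v) := by
  obtain ⟨ρ, hρ, rfl⟩ := cs.exists_isReduced v
  have hiρ : cs.IsReduced (i :: ρ) := by
    rw [IsReduced, wordProd_cons, length_cons, ← hρ.eq]
    rcases cs.length_simple_mul (π ρ) i with h' | h' <;> omega
  simpa [wordProd_cons] using bruhatLE_of_sublist hiρ (sublist_cons_self i ρ)

theorem bruhatLE_simple_mul_of_le {m w v : W} {i : B} (hmw : BruhatLE cs m w)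
    (hmiw : BruhatLE cs m (s i * w)) (hwv : BruhatLE cs w v) : BruhatLE cs m (s i * v) := by
  rcases cs.length_simple_mul v i with hup | hdown
  · exact hmw.trans (hwv.trans (bruhatLE_simple_mul_of_length_lt (by omega)))
  obtain ⟨ρ, hρ, hρv⟩ := cs.exists_isReduced (s i * v)
  have hiρ : cs.IsReduced (i :: ρ) := by
    rw [IsReduced, wordProd_cons, ← hρv, simple_mul_simple_cancel_left, length_cons, ← hρ.eq,
      ← hρv]
    omega
  have hiρv : π (i :: ρ) = v := by rw [wordProd_cons, ← hρv, simple_mul_simple_cancel_left]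
  obtain ⟨ω', hω', rfl⟩ := hwv.exists_sublist hiρ hiρv
  rw [hρv]
  rcases sublist_cons_iff.mp hω' with hω'ρ | ⟨κ, rfl, hκρ⟩
  · exact hmw.trans (bruhatLE_of_sublist hρ hω'ρ)
  · rw [wordProd_cons, simple_mul_simple_cancel_left] at hmiw
    exact hmiw.trans (bruhatLE_of_sublist hρ hκρ)

theorem _root_.mem_lCoset_iff {P : Subgroup W} {u x : W} : x ∈ lCoset P u ↔ u⁻¹ * x ∈ P :=
  ⟨by rintro ⟨b, hb, rfl⟩; simpa using hb, fun h => ⟨_, h, by group⟩⟩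

theorem _root_.lCoset_eq_of_mem {P : Subgroup W} {u x : W} (h : x ∈ lCoset P u) :
    lCoset P x = lCoset P u := by
  ext y
  rw [mem_lCoset_iff, mem_lCoset_iff] at *
  constructor <;> intro hy
  · simpa [mul_assoc] using P.mul_mem h hy
  · simpa [mul_assoc] using P.mul_mem (P.inv_mem h) hy

theorem _root_.self_mem_lCoset (P : Subgroup W) (u : W) : u ∈ lCoset P u :=
  ⟨1, P.one_mem, (mul_one u).symm⟩

theorem _root_.IsBrMin.length_le_length_mul {P : Subgroup W} {u m : W}
    (h : IsBrMin cs (lCoset P u) m) {b : W} (hb : b ∈ P) : ℓ m ≤ ℓ (m * b) :=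
  (h.2 _ (lCoset_eq_of_mem h.1 ▸ ⟨b, hb, rfl⟩)).length_le

section Parabolic

variable (X : Set B)

local notation "W_X" => Subgroup.closure (cs.simple '' X)

theorem wordProd_mem_closure {α : List B} (hα : ∀ x ∈ α, x ∈ X) : π α ∈ W_X :=
  Subgroup.list_prod_mem _
    (forall_mem_map.mpr fun i hi => Subgroup.subset_closure ⟨i, hα i hi, rfl⟩)

theorem exists_isReduced_of_mem_closure {c : W} (hc : c ∈ W_X) :
    ∃ κ : List B, (∀ x ∈ κ, x ∈ X) ∧ cs.IsReduced κ ∧ π κ = c := by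
  have hword : ∃ α : List B, (∀ x ∈ α, x ∈ X) ∧ π α = c := by
    induction hc using Subgroup.closure_induction with
    | mem _ hg =>
      obtain ⟨i, hi, rfl⟩ := hg
      exact ⟨[i], by simpa using hi, wordProd_singleton cs i⟩
    | one => exact ⟨[], by simp, wordProd_nil cs⟩
    | mul _ _ _ _ ihg ihh =>
      obtain ⟨α, hαX, rfl⟩ := ihg
      obtain ⟨β, hβX, rfl⟩ := ihh
      exact ⟨α ++ β, fun x hx => (mem_append.mp hx).elim (hαX x) (hβX x),
        wordProd_append cs α β⟩
    | inv _ _ ihg =>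
      obtain ⟨α, hαX, rfl⟩ := ihg
      exact ⟨α.reverse, by simpa using hαX, wordProd_reverse cs α⟩
  obtain ⟨α, hαX, rfl⟩ := hword
  obtain ⟨κ, hκα, hκ, hκπ⟩ := cs.exists_isReduced_sublist α
  exact ⟨κ, fun x hx => hαX x (hκα.subset hx), hκ, hκπ⟩

theorem isReduced_append_of_forall_length_le {ω κ : List B} (hω : cs.IsReduced ω)
    (hκ : cs.IsReduced κ) (hκX : ∀ x ∈ κ, x ∈ X)
    (hmin : ∀ b ∈ W_X, ℓ (π ω) ≤ ℓ (π ω * b)) :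
    cs.IsReduced (ω ++ κ) := by
  induction κ using reverseRecOn with
  | nil => simpa
  | append_singleton κ x ih =>
    have hκ' : cs.IsReduced κ := by simpa using hκ.take κ.length
    have hκ'X : ∀ y ∈ κ, y ∈ X := fun y hy => hκX y (mem_append_left _ hy)
    have hred := ih hκ' hκ'X
    have hlen := hκ.eq
    rw [wordProd_append, wordProd_singleton, length_append, length_singleton] at hlen
    rw [← append_assoc]
    rcases cs.length_mul_simple (π (ω ++ κ)) x with hup | hdown
    · rw [IsReduced, wordProd_append, wordProd_singleton, hup, hred.eq]
      simp [add_assoc]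
    exfalso
    obtain ⟨j, hj, hje⟩ := cs.exists_wordProd_mul_eq_wordProd_eraseIdx
      (ω := ω ++ κ) ⟨cs.isReflection_simple x, by omega⟩
    -- the deleted letter lies either in `ω`, contradicting the minimality of `π ω` in its coset,
    -- or in `κ ++ [x]`, contradicting its reducedness
    rcases Nat.lt_or_ge j ω.length with hjω | hjω
    · rw [eraseIdx_append_of_lt_length hjω, wordProd_append, wordProd_append] at hje
      have hcoset : π (ω.eraseIdx j) = π ω * (π κ * s x * (π κ)⁻¹) := by
        rw [← mul_inv_eq_iff_eq_mul.mpr hje]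
        group
      have hmem : π κ * s x * (π κ)⁻¹ ∈ W_X :=
        Subgroup.mul_mem _ (Subgroup.mul_mem _ (cs.wordProd_mem_closure X hκ'X)
          (Subgroup.subset_closure ⟨x, hκX x (by simp), rfl⟩))
          (Subgroup.inv_mem _ (cs.wordProd_mem_closure X hκ'X))
      have hshort := cs.length_wordProd_le (ω.eraseIdx j)
      rw [hcoset, length_eraseIdx_of_lt hjω] at hshort
      have hlong := hmin _ hmem
      have := hω.eq
      omega
    · rw [eraseIdx_append_of_length_le hjω, wordProd_append, wordProd_append, mul_assoc,
        mul_right_inj] at hje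
      have := cs.length_wordProd_le (κ.eraseIdx (j - ω.length))
      rw [← hje, hlen] at this
      have := length_eraseIdx_le κ (j - ω.length)
      omega

theorem bruhatLE_of_nonempty_jset {σ w mw mσ : W}
    (hmw : IsBrMin cs (lCoset (W_X) w) mw)
    (hmσ : IsBrMin cs (lCoset (W_X) σ) mσ)
    (hJ : (Jset cs (W_X) σ w).Nonempty) : BruhatLE cs mw mσ := by
  obtain ⟨v, hvσ, hwv⟩ := hJ
  obtain ⟨ωσ, hωσ, rfl⟩ := cs.exists_isReduced mσ
  obtain ⟨κ, hκX, hκ, hκv⟩ := cs.exists_isReduced_of_mem_closure X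
    (mem_lCoset_iff.mp (lCoset_eq_of_mem hmσ.1 ▸ hvσ))
  have hred := cs.isReduced_append_of_forall_length_le X hωσ hκ hκX
    fun b hb => hmσ.length_le_length_mul hb
  have hv : π (ωσ ++ κ) = v := by rw [wordProd_append, hκv, mul_inv_cancel_left]
  obtain ⟨δ, hδ, hδmw⟩ := ((hmw.2 w (self_mem_lCoset _ w)).trans hwv).exists_sublist hred hv
  obtain ⟨δ₁, δ₂, rfl, hδ₁, hδ₂⟩ := sublist_append_iff.mp hδ
  have hδ₁w : π δ₁ ∈ lCoset (W_X) w := by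
    rw [wordProd_append] at hδmw
    rw [← lCoset_eq_of_mem hmw.1, mem_lCoset_iff, ← hδmw, mul_inv_rev, mul_assoc, inv_mul_cancel,
      mul_one]
    exact Subgroup.inv_mem _ (cs.wordProd_mem_closure X fun x hx => hκX x (hδ₂.subset hx))
  exact (hmw.2 _ hδ₁w).trans (bruhatLE_of_sublist hωσ hδ₁)

theorem nonempty_jset_of_bruhatLE {σ w mw mσ : W}
    (hmw : mw ∈ lCoset (W_X) w)
    (hmσ : IsBrMin cs (lCoset (W_X) σ) mσ)
    (hle : BruhatLE cs mw mσ) : (Jset cs (W_X) σ w).Nonempty := by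
  obtain ⟨ωσ, hωσ, rfl⟩ := cs.exists_isReduced mσ
  have hb : mw⁻¹ * w ∈ W_X := by
    simpa using Subgroup.inv_mem _ (mem_lCoset_iff.mp hmw)
  obtain ⟨κ, hκX, hκ, hκb⟩ := cs.exists_isReduced_of_mem_closure X hb
  have hred := cs.isReduced_append_of_forall_length_le X hωσ hκ hκX
    fun b hb => hmσ.length_le_length_mul hb
  refine ⟨π ωσ * (mw⁻¹ * w), lCoset_eq_of_mem hmσ.1 ▸ ⟨_, hb, rfl⟩, ?_⟩
  obtain ⟨δ, hδ, hδmw⟩ := hle.exists_sublist hωσ rfl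
  simpa [wordProd_append, hδmw, hκb] using
    bruhatLE_of_sublist hred (hδ.append (Sublist.refl κ))

end Parabolic

theorem jset_subset_jset {P : Subgroup W} {σ w w' : W} (h : BruhatLE cs w w') :
    Jset cs P σ w' ⊆ Jset cs P σ w :=
  fun _ hv => ⟨hv.1, h.trans hv.2⟩

theorem jset_subset_image_simple_mul {P : Subgroup W} {σ w m : W} {i : B}
    (hmw : BruhatLE cs m w) (hmiw : BruhatLE cs m (s i * w)) :
    Jset cs P σ w ⊆ (s i * ·) '' Jset cs P (s i * σ) m := by
  rintro v ⟨hvσ, hwv⟩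
  refine ⟨s i * v, ⟨?_, bruhatLE_simple_mul_of_le hmw hmiw hwv⟩,
    simple_mul_simple_cancel_left cs i⟩
  rw [mem_lCoset_iff] at hvσ ⊢
  simpa [mul_assoc, inv_simple, simple_mul_simple_cancel_left] using hvσ

end CoxeterSystem

/-- Properties of `J_{σW₁}(w) = {v ∈ σW₁ : w ≤ v}`: (1) it is antitone in `w`;
(2) for any simple reflection `s`, `J_{σW₁}(w) ⊆ s·J_{sσW₁}(w ∧ sw)` (where `w ∧ sw`
denotes the Bruhat-smaller of `w` and `sw`); (3) `J_{σW₁}(w)` is nonempty if and only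
if `brmin(wW₁) ≤ brmin(σW₁)`. -/
theorem stmt_10 (cs : CoxeterSystem M W) (W₁ : Subgroup W)
    (h₁ : IsStdParabolic cs W₁) (σ w : W) :
    (∀ w' : W, BruhatLE cs w w' → Jset cs W₁ σ w' ⊆ Jset cs W₁ σ w) ∧
    (∀ (i : B) (m : W),
      (m = w ∨ m = cs.simple i * w) →
      BruhatLE cs m w → BruhatLE cs m (cs.simple i * w) →
      Jset cs W₁ σ w ⊆ (fun x => cs.simple i * x) '' Jset cs W₁ (cs.simple i * σ) m) ∧
    (∀ mw mσ : W,
      IsBrMin cs (lCoset W₁ w) mw → IsBrMin cs (lCoset W₁ σ) mσ →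
      ((Jset cs W₁ σ w).Nonempty ↔ BruhatLE cs mw mσ)) := by
  obtain ⟨X, rfl⟩ := h₁
  refine ⟨fun _ => cs.jset_subset_jset, fun _ _ _ => cs.jset_subset_image_simple_mul,
    fun _ _ hmw hmσ => ⟨?_, ?_⟩⟩
  · exact cs.bruhatLE_of_nonempty_jset X hmw hmσ
  · exact cs.nonempty_jset_of_bruhatLE X hmw.1 hmσ
end

section
/- For any finite word w in the positive integers, there is a unique smallest partition p_w such that w is p_w-dominant; smallest in the sense that the Young diagram of p_w is contained in the Young diagram of every partition p for which w is p-dominant (and w is p_w-dominant). -/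
/-- A word in the positive integers (a list of naturals, each `≥ 1`) is a ballot
sequence if for every `j ≥ 1` and every prefix, the number of occurrences of `j` is at
least the number of occurrences of `j + 1`. -/
def IsBallot (w : List ℕ) : Prop :=
  ∀ t : List ℕ, t <+: w → ∀ j : ℕ, 1 ≤ j → t.count (j + 1) ≤ t.count j

/-- A partition, recorded as a weakly decreasing, eventually zero sequence of
non-negative integers `p 0 ≥ p 1 ≥ ⋯` (so `p i` is the `(i+1)`-st part). -/
def IsPartitionFun (p : ℕ → ℕ) : Prop :=
  (∀ i j : ℕ, i ≤ j → p j ≤ p i) ∧ ∃ N : ℕ, ∀ n : ℕ, N ≤ n → p n = 0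

/-- The word `w(p)` of a partition `p`: `p 0` ones, followed by `p 1` twos, etc.
(computed using any bound `N` beyond the support of `p`). -/
def partitionWord (p : ℕ → ℕ) (N : ℕ) : List ℕ :=
  (List.range N).flatMap fun i => List.replicate (p i) (i + 1)

/-- A word `w` is `p`-dominant if `w(p) ++ w` is a ballot sequence. -/
def IsDominant (p : ℕ → ℕ) (w : List ℕ) : Prop :=
  ∀ N : ℕ, (∀ n : ℕ, N ≤ n → p n = 0) → IsBallot (partitionWord p N ++ w)

/-! Let `d_j(w)` be the largest excess of letters `j + 1` over letters `j` in a prefix of `w`.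
Prefixes of `w(p) ++ w` ending inside `w(p)` are ballot because `p` is weakly decreasing, while
`w(p)` alone contributes `p_j - p_{j+1}` more letters `j` than `j + 1` to every longer prefix.
So `w` is `p`-dominant exactly when `p_j - p_{j+1} ≥ d_j(w)` for all `j ≥ 1`, and the smallest such
partition is given by the tail sums `p_i = ∑_{j ≥ i} d_j(w)`. -/

theorem List.IsPrefix.prefix_or_eq_append {α : Type*} {t a b : List α} (h : t <+: a ++ b) :
    t <+: a ∨ ∃ s, s <+: b ∧ t = a ++ s := by
  obtain ⟨r, hr⟩ := h
  rcases List.append_eq_append_iff.1 hr with ⟨s, rfl, rfl⟩ | ⟨s, rfl, rfl⟩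
  · exact .inl ⟨s, rfl⟩
  · exact .inr ⟨s, ⟨r, rfl⟩, rfl⟩

theorem partitionWord_succ (p : ℕ → ℕ) (N : ℕ) :
    partitionWord p (N + 1) = partitionWord p N ++ List.replicate (p N) (N + 1) := by
  simp [partitionWord, List.range_succ]

theorem count_succ_partitionWord (p : ℕ → ℕ) (N j : ℕ) :
    (partitionWord p N).count (j + 1) = if j < N then p j else 0 := by
  induction N with
  | zero => simp [partitionWord]
  | succ N ih =>
    rw [partitionWord_succ, List.count_append, ih, List.count_replicate]
    split_ifs <;> simp_all <;> omega

theorem count_succ_partitionWord_of_support {p : ℕ → ℕ} {N : ℕ}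
    (hN : ∀ n, N ≤ n → p n = 0) (j : ℕ) : (partitionWord p N).count (j + 1) = p j := by
  rw [count_succ_partitionWord]
  split_ifs with h
  · rfl
  · exact (hN j (not_lt.1 h)).symm

theorem isBallot_append_iff {a b : List ℕ} :
    IsBallot (a ++ b) ↔
      IsBallot a ∧ ∀ s, s <+: b → ∀ j, 1 ≤ j → (a ++ s).count (j + 1) ≤ (a ++ s).count j := by
  refine ⟨fun h => ⟨fun t ht => h t (ht.trans (a.prefix_append b)),
    fun s hs => h (a ++ s) ((List.prefix_append_right_inj a).2 hs)⟩, fun ⟨ha, hb⟩ t ht => ?_⟩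
  rcases ht.prefix_or_eq_append with ht | ⟨s, hs, rfl⟩
  · exact ha t ht
  · exact hb s hs

theorem isBallot_partitionWord {p : ℕ → ℕ} (hp : Antitone p) (N : ℕ) :
    IsBallot (partitionWord p N) := by
  induction N with
  | zero =>
    intro t ht
    simp [List.prefix_nil.1 ht]
  | succ N ih =>
    rw [partitionWord_succ, isBallot_append_iff]
    refine ⟨ih, fun s hs j hj => ?_⟩
    obtain ⟨hlen, hs⟩ := List.prefix_replicate_iff.1 hs
    obtain ⟨k, rfl⟩ := Nat.exists_eq_add_of_le' hj
    have hk : p (k + 1) ≤ p k := hp (Nat.le_add_right k 1)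
    have hN : k + 1 = N → p N ≤ p (k + 1) := by rintro rfl; rfl
    rw [hs]
    simp only [List.count_append, count_succ_partitionWord, List.count_replicate, beq_iff_eq]
    split_ifs <;> omega

def ballotDefect (w : List ℕ) (j : ℕ) : ℕ :=
  w.inits.toFinset.sup fun s => s.count (j + 1) - s.count j

theorem ballotDefect_le_iff {w : List ℕ} {j c : ℕ} :
    ballotDefect w j ≤ c ↔ ∀ s, s <+: w → s.count (j + 1) ≤ s.count j + c := by
  simp only [ballotDefect, Finset.sup_le_iff, List.mem_toFinset, List.mem_inits, tsub_le_iff_left]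

theorem ballotDefect_eq_zero_of_not_mem {w : List ℕ} {j : ℕ} (h : j + 1 ∉ w) :
    ballotDefect w j = 0 :=
  Nat.le_zero.1 <| ballotDefect_le_iff.2 fun s hs => by
    rw [List.count_eq_zero.2 fun hj => h (hs.subset hj)]
    exact Nat.zero_le _

theorem isDominant_iff {p : ℕ → ℕ} (hp : IsPartitionFun p) {w : List ℕ} :
    IsDominant p w ↔ ∀ k, ballotDefect w (k + 1) + p (k + 1) ≤ p k := by
  obtain ⟨hanti, N, hN⟩ := hp
  have hcount : ∀ {M}, (∀ n, M ≤ n → p n = 0) → ∀ s k,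
      (partitionWord p M ++ s).count (k + 1) = p k + s.count (k + 1) := fun hM s k => by
    rw [List.count_append, count_succ_partitionWord_of_support hM]
  constructor
  · intro hdom k
    have hk := hanti k (k + 1) (Nat.le_add_right k 1)
    suffices ballotDefect w (k + 1) ≤ p k - p (k + 1) by omega
    refine ballotDefect_le_iff.2 fun s hs => ?_
    have := (isBallot_append_iff.1 (hdom N hN)).2 s hs (k + 1) k.succ_pos
    rw [hcount hN, hcount hN] at this
    omega
  · intro hd M hM
    refine isBallot_append_iff.2 ⟨isBallot_partitionWord (fun i j h => hanti i j h) M,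
      fun s hs j hj => ?_⟩
    obtain ⟨k, rfl⟩ := Nat.exists_eq_add_of_le' hj
    have hs := ballotDefect_le_iff.1 (le_refl (ballotDefect w (k + 1))) s hs
    rw [hcount hM, hcount hM]
    have := hd k
    omega

-- Every letter of `w` is at most `w.sum`, so the terms with `j ≥ w.sum` would vanish.
def minDominant (w : List ℕ) (i : ℕ) : ℕ :=
  ∑ j ∈ Finset.Ico i w.sum, ballotDefect w (j + 1)

theorem minDominant_eq_zero {w : List ℕ} {i : ℕ} (h : w.sum ≤ i) : minDominant w i = 0 := by
  simp [minDominant, h]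

theorem minDominant_eq_add (w : List ℕ) (i : ℕ) :
    minDominant w i = ballotDefect w (i + 1) + minDominant w (i + 1) := by
  rcases lt_or_ge i w.sum with h | h
  · exact Finset.sum_eq_sum_Ico_succ_bot h _
  · rw [minDominant_eq_zero h, minDominant_eq_zero (by omega),
      ballotDefect_eq_zero_of_not_mem fun hw => by have := List.le_sum_of_mem hw; omega]

theorem antitone_minDominant (w : List ℕ) : Antitone (minDominant w) :=
  fun _ _ hij => Finset.sum_le_sum_of_subset (Finset.Ico_subset_Ico_left hij)

theorem isPartitionFun_minDominant (w : List ℕ) : IsPartitionFun (minDominant w) :=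
  ⟨fun _ _ h => antitone_minDominant w h, w.sum, fun _ hn => minDominant_eq_zero hn⟩

theorem minDominant_le {w : List ℕ} {q : ℕ → ℕ}
    (hq : ∀ k, ballotDefect w (k + 1) + q (k + 1) ≤ q k) (i : ℕ) : minDominant w i ≤ q i := by
  induction hn : w.sum - i generalizing i with
  | zero => exact (minDominant_eq_zero (by omega)).trans_le (Nat.zero_le _)
  | succ n ih =>
    have := ih (i + 1) (by omega)
    have := hq i
    rw [minDominant_eq_add]
    omega

theorem stmt_18_general (w : List ℕ) :
    ∃! p : ℕ → ℕ, IsPartitionFun p ∧ IsDominant p w ∧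
      ∀ q : ℕ → ℕ, IsPartitionFun q → IsDominant q w → ∀ i : ℕ, p i ≤ q i := by
  have hpart := isPartitionFun_minDominant w
  have hdom : IsDominant (minDominant w) w :=
    (isDominant_iff hpart).2 fun k => (minDominant_eq_add w k).ge
  have hmin : ∀ q, IsPartitionFun q → IsDominant q w → ∀ i, minDominant w i ≤ q i :=
    fun q hq hqw => minDominant_le ((isDominant_iff hq).1 hqw)
  refine ⟨minDominant w, ⟨hpart, hdom, hmin⟩, fun q ⟨hq, hqw, hqmin⟩ => ?_⟩
  exact funext fun i => le_antisymm (hqmin _ hpart hdom i) (hmin q hq hqw i)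

/-- For any word `w` in the positive integers, there is a unique smallest partition
`p_w` such that `w` is `p_w`-dominant: `w` is `p_w`-dominant, the Young diagram of `p_w`
is contained in that of every partition `q` for which `w` is `q`-dominant (i.e.
`p_w ≤ q` pointwise), and `p_w` is the unique such partition. -/
theorem stmt_18 (w : List ℕ) (hw : ∀ x ∈ w, 1 ≤ x) :
    ∃! p : ℕ → ℕ, IsPartitionFun p ∧ IsDominant p w ∧
      ∀ q : ℕ → ℕ, IsPartitionFun q → IsDominant q w → ∀ i : ℕ, p i ≤ q i :=
  stmt_18_general w
end
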